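/- Let Q_n be probability distributions on ℤ_{≥0} converging in distribution and in expectation to a distribution Q with mean ν > 1. Then the survival probabilities s_n of Galton–Watson processes with offspring distribution Q_n converge to the survival probability s > 0 of the Galton–Watson process with offspring distribution Q. -/

import Mathlib

/-!
The extinction probability `ρ` is the smallest zero in `[0, 1]` of the convex function
`f z = G z - z`, where `G` is the generating function; `f` also vanishes at `1`. So `f > 0` on
`[0, ρ)`, and since a mean `ν > 1` makes `f` negative just below `1`, convexity gives `f < 0` on
`(ρ, 1)`. For `z < 1` the terms of `G_n z` are dominated by `z ^ l`, so `G_n z → G z` by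
dominated convergence. Hence the strict sign of `f` at each `z ∈ [0, 1)` other than `ρ` is
eventually shared by `f_n = G_n - id`, and this traps `ρ_n` in any neighbourhood of `ρ`.
-/

open Filter Set Topology

theorem ConvexOn.lt_zero_of_mem_Ioo {s : Set ℝ} {f : ℝ → ℝ} (hf : ConvexOn ℝ s f) {a b c z : ℝ}
    (ha : a ∈ s) (hb : b ∈ s) (hfa : f a ≤ 0) (hfb : f b ≤ 0) (hc : c ∈ Ioo a b) (hfc : f c < 0)
    (hz : z ∈ Ioo a b) : f z < 0 := by
  have hcs : c ∈ s := hf.1.ordConnected.out ha hb (Ioo_subset_Icc_self hc)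
  by_contra! hfz
  rcases lt_trichotomy z c with hzc | rfl | hcz
  · have := hf.le_right_of_left_le ha hcs (Ioo_subset_openSegment ⟨hz.1, hzc⟩) (hfa.trans hfz)
    linarith
  · linarith
  · have := hf.le_left_of_right_le hcs hb (Ioo_subset_openSegment ⟨hcz, hz.2⟩) (hfb.trans hfz)
    linarith

theorem mul_pow_le_one_sub_pow {z : ℝ} (hz : z ∈ Icc (0 : ℝ) 1) (l : ℕ) :
    (1 - z) * (l * z ^ l) ≤ 1 - z ^ l := by
  rw [← mul_neg_geom_sum]
  gcongr
  · linarith [hz.2]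
  · calc (l : ℝ) * z ^ l = ∑ _i ∈ Finset.range l, z ^ l := by simp
      _ ≤ ∑ i ∈ Finset.range l, z ^ i := Finset.sum_le_sum fun i hi =>
          pow_le_pow_of_le_one hz.1 hz.2 (Finset.mem_range.1 hi).le

namespace GaltonWatson

noncomputable def pgf (p : ℕ → ℝ) (z : ℝ) : ℝ := ∑' l : ℕ, p l * z ^ l

noncomputable def extinctionProb (p : ℕ → ℝ) : ℝ :=
  sInf {z : ℝ | z ∈ Set.Icc (0 : ℝ) 1 ∧ pgf p z = z}

variable {p : ℕ → ℝ} {z : ℝ}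

theorem summable_pgf (hp0 : ∀ l, 0 ≤ p l) (hps : Summable p) (hz : z ∈ Icc (0 : ℝ) 1) :
    Summable fun l => p l * z ^ l :=
  hps.of_nonneg_of_le (fun l => mul_nonneg (hp0 l) (pow_nonneg hz.1 l))
    (fun l => mul_le_of_le_one_right (hp0 l) (pow_le_one₀ hz.1 hz.2))

theorem pgf_one (hp : HasSum p 1) : pgf p 1 = 1 := by
  simp [pgf, hp.tsum_eq]

theorem pgf_nonneg (hp0 : ∀ l, 0 ≤ p l) (hz : 0 ≤ z) : 0 ≤ pgf p z :=
  tsum_nonneg fun l => mul_nonneg (hp0 l) (pow_nonneg hz l)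

theorem continuousOn_pgf (hp0 : ∀ l, 0 ≤ p l) (hps : Summable p) :
    ContinuousOn (pgf p) (Icc 0 1) := by
  refine continuousOn_tsum (fun l => continuousOn_const.mul (continuousOn_pow l)) hps
    fun l x hx => ?_
  rw [norm_mul, Real.norm_of_nonneg (hp0 l), norm_pow, Real.norm_of_nonneg hx.1]
  exact mul_le_of_le_one_right (hp0 l) (pow_le_one₀ hx.1 hx.2)

theorem convexOn_pgf (hp0 : ∀ l, 0 ≤ p l) (hps : Summable p) :
    ConvexOn ℝ (Icc 0 1) (pgf p) := by
  refine ⟨convex_Icc 0 1, fun x hx y hy a b ha hb hab => ?_⟩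
  have hsx := summable_pgf hp0 hps hx
  have hsy := summable_pgf hp0 hps hy
  have hsxy := summable_pgf hp0 hps (convex_Icc 0 1 hx hy ha hb hab)
  simp only [smul_eq_mul, pgf] at hsxy ⊢
  rw [← tsum_mul_left, ← tsum_mul_left, ← (hsx.mul_left a).tsum_add (hsy.mul_left b)]
  refine hsxy.tsum_le_tsum (fun l => ?_) ((hsx.mul_left a).add (hsy.mul_left b))
  have hpow := (convexOn_pow l).2 (mem_Ici.2 hx.1) (mem_Ici.2 hy.1) ha hb hab
  simp only [smul_eq_mul] at hpow
  nlinarith [hp0 l]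

theorem convexOn_pgf_sub_id (hp0 : ∀ l, 0 ≤ p l) (hps : Summable p) :
    ConvexOn ℝ (Icc 0 1) fun z => pgf p z - z :=
  (convexOn_pgf hp0 hps).sub (concaveOn_id (convex_Icc 0 1))

theorem extinctionProb_le (hz : z ∈ Icc (0 : ℝ) 1) (hfz : pgf p z = z) : extinctionProb p ≤ z :=
  csInf_le ⟨0, fun _ hw => hw.1.1⟩ ⟨hz, hfz⟩

theorem extinctionProb_nonneg (hp : HasSum p 1) : 0 ≤ extinctionProb p :=
  le_csInf ⟨1, ⟨zero_le_one, le_rfl⟩, pgf_one hp⟩ fun _ hw => hw.1.1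

theorem extinctionProb_le_one (hp : HasSum p 1) : extinctionProb p ≤ 1 :=
  extinctionProb_le ⟨zero_le_one, le_rfl⟩ (pgf_one hp)

theorem extinctionProb_mem_Icc (hp : HasSum p 1) : extinctionProb p ∈ Icc (0 : ℝ) 1 :=
  ⟨extinctionProb_nonneg hp, extinctionProb_le_one hp⟩

theorem pgf_extinctionProb (hp0 : ∀ l, 0 ≤ p l) (hp : HasSum p 1) :
    pgf p (extinctionProb p) = extinctionProb p := by
  have hclosed : IsClosed {z : ℝ | z ∈ Icc (0 : ℝ) 1 ∧ pgf p z = z} := by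
    have hset : {z : ℝ | z ∈ Icc (0 : ℝ) 1 ∧ pgf p z = z} =
        Icc 0 1 ∩ (fun z => pgf p z - z) ⁻¹' {0} := by
      ext z; simp [sub_eq_zero]
    rw [hset]
    exact ((continuousOn_pgf hp0 hp.summable).sub continuousOn_id).preimage_isClosed_of_isClosed
      isClosed_Icc isClosed_singleton
  exact (hclosed.csInf_mem ⟨1, ⟨zero_le_one, le_rfl⟩, pgf_one hp⟩ ⟨0, fun _ hw => hw.1.1⟩).2

theorem extinctionProb_le_of_pgf_le (hp0 : ∀ l, 0 ≤ p l) (hps : Summable p)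
    (hz : z ∈ Icc (0 : ℝ) 1) (hfz : pgf p z ≤ z) : extinctionProb p ≤ z := by
  have hcont : ContinuousOn (fun w => pgf p w - w) (Icc 0 z) :=
    ((continuousOn_pgf hp0 hps).sub continuousOn_id).mono (Icc_subset_Icc le_rfl hz.2)
  have hsign : (0 : ℝ) ∈ Icc (pgf p z - z) (pgf p 0 - 0) :=
    ⟨by linarith, by linarith [pgf_nonneg hp0 (le_refl (0 : ℝ))]⟩
  obtain ⟨w, hw, hfw⟩ := intermediate_value_Icc' hz.1 hcont hsign
  exact (extinctionProb_le ⟨hw.1, hw.2.trans hz.2⟩ (sub_eq_zero.1 hfw)).trans hw.2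

theorem lt_pgf_of_lt_extinctionProb (hp0 : ∀ l, 0 ≤ p l) (hp : HasSum p 1) (hz0 : 0 ≤ z)
    (hz : z < extinctionProb p) : z < pgf p z :=
  lt_of_not_ge fun hfz => hz.not_ge <| extinctionProb_le_of_pgf_le hp0 hp.summable
    ⟨hz0, hz.le.trans (extinctionProb_le_one hp)⟩ hfz

theorem pgf_le_self_of_extinctionProb_le (hp0 : ∀ l, 0 ≤ p l) (hp : HasSum p 1)
    (hz : extinctionProb p ≤ z) (hz1 : z ≤ 1) : pgf p z ≤ z := by
  have := (convexOn_pgf_sub_id hp0 hp.summable).le_on_segment (z := z)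
    (extinctionProb_mem_Icc hp) ⟨zero_le_one, le_rfl⟩
    (by rw [segment_eq_Icc (hz.trans hz1)]; exact ⟨hz, hz1⟩)
  simp only [pgf_extinctionProb hp0 hp, pgf_one hp, sub_self, max_self] at this
  linarith

theorem extinctionProb_lt_of_pgf_lt (hp0 : ∀ l, 0 ≤ p l) (hp : HasSum p 1)
    (hz : z ∈ Icc (0 : ℝ) 1) (hfz : pgf p z < z) : extinctionProb p < z :=
  (extinctionProb_le_of_pgf_le hp0 hp.summable hz hfz.le).lt_of_ne fun h => by
    rw [← h, pgf_extinctionProb hp0 hp] at hfz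
    exact hfz.false

theorem extinctionProb_lt_one (hp0 : ∀ l, 0 ≤ p l) (hp : HasSum p 1) {c : ℝ}
    (hc : c ∈ Ico (0 : ℝ) 1) (hfc : pgf p c < c) : extinctionProb p < 1 :=
  (extinctionProb_lt_of_pgf_lt hp0 hp (Ico_subset_Icc_self hc) hfc).trans hc.2

theorem pgf_lt_self_of_extinctionProb_lt (hp0 : ∀ l, 0 ≤ p l) (hp : HasSum p 1) {c : ℝ}
    (hc : c ∈ Ico (0 : ℝ) 1) (hfc : pgf p c < c) (hz : extinctionProb p < z) (hz1 : z < 1) :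
    pgf p z < z := by
  have := (convexOn_pgf_sub_id hp0 hp.summable).lt_zero_of_mem_Ioo
    (extinctionProb_mem_Icc hp) ⟨zero_le_one, le_rfl⟩
    (by simp [pgf_extinctionProb hp0 hp]) (by simp [pgf_one hp])
    ⟨extinctionProb_lt_of_pgf_lt hp0 hp (Ico_subset_Icc_self hc) hfc, hc.2⟩ (sub_neg.2 hfc)
    ⟨hz, hz1⟩
  exact sub_neg.1 this

theorem one_sub_mul_sum_le_one_sub_pgf (hp0 : ∀ l, 0 ≤ p l) (hp : HasSum p 1)
    (hz : z ∈ Icc (0 : ℝ) 1) (N : ℕ) :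
    (1 - z) * ∑ l ∈ Finset.range N, l * p l * z ^ l ≤ 1 - pgf p z := by
  have hsum : HasSum (fun l => p l - p l * z ^ l) (1 - pgf p z) :=
    hp.sub (summable_pgf hp0 hp.summable hz).hasSum
  calc (1 - z) * ∑ l ∈ Finset.range N, l * p l * z ^ l
      = ∑ l ∈ Finset.range N, p l * ((1 - z) * (l * z ^ l)) := by
        rw [Finset.mul_sum]; exact Finset.sum_congr rfl fun l _ => by ring
    _ ≤ ∑ l ∈ Finset.range N, (p l - p l * z ^ l) := Finset.sum_le_sum fun l _ => by
        nlinarith [mul_le_mul_of_nonneg_left (mul_pow_le_one_sub_pow hz l) (hp0 l)]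
    _ ≤ 1 - pgf p z := sum_le_hasSum _ (fun l _ => by
        nlinarith [hp0 l, pow_le_one₀ hz.1 hz.2 (n := l)]) hsum

theorem exists_pgf_lt_self (hp0 : ∀ l, 0 ≤ p l) (hp : HasSum p 1) {ν : ℝ}
    (hν : HasSum (fun l : ℕ => (l : ℝ) * p l) ν) (hν1 : 1 < ν) :
    ∃ c ∈ Ico (0 : ℝ) 1, pgf p c < c := by
  obtain ⟨N, hN⟩ := (hν.tendsto_sum_nat.eventually (eventually_gt_nhds hν1)).exists
  set P : ℝ → ℝ := fun z => ∑ l ∈ Finset.range N, l * p l * z ^ l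
  have hP : Tendsto P (𝓝[<] 1) (𝓝 (P 1)) :=
    (by fun_prop : Continuous P).continuousAt.continuousWithinAt.tendsto
  have hP1 : 1 < P 1 := by simpa [P] using hN
  obtain ⟨c, hPc, hc⟩ :=
    ((hP.eventually (eventually_gt_nhds hP1)).and (Ioo_mem_nhdsLT zero_lt_one)).exists
  refine ⟨c, ⟨hc.1.le, hc.2⟩, ?_⟩
  have := one_sub_mul_sum_le_one_sub_pgf hp0 hp ⟨hc.1.le, hc.2.le⟩ N
  nlinarith [hc.2]

theorem tendsto_pgf {ι : Type*} {F : Filter ι} {q : ι → ℕ → ℝ} {Q : ℕ → ℝ}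
    (hq0 : ∀ n l, 0 ≤ q n l) (hq : ∀ n, HasSum (q n) 1)
    (hdist : ∀ l, Tendsto (fun n => q n l) F (𝓝 (Q l))) (hz : z ∈ Ico (0 : ℝ) 1) :
    Tendsto (fun n => pgf (q n) z) F (𝓝 (pgf Q z)) := by
  refine tendsto_tsum_of_dominated_convergence (summable_geometric_of_lt_one hz.1 hz.2)
    (fun l => (hdist l).mul_const _) (Eventually.of_forall fun n l => ?_)
  rw [norm_mul, Real.norm_of_nonneg (hq0 n l), norm_pow, Real.norm_of_nonneg hz.1]
  exact mul_le_of_le_one_left (pow_nonneg hz.1 l) (le_hasSum (hq n) l fun j _ => hq0 n j)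

theorem tendsto_extinctionProb {ι : Type*} {F : Filter ι} {q : ι → ℕ → ℝ} {Q : ℕ → ℝ}
    (hq0 : ∀ n l, 0 ≤ q n l) (hq : ∀ n, HasSum (q n) 1) (hQ0 : ∀ l, 0 ≤ Q l) (hQ : HasSum Q 1)
    (hdist : ∀ l, Tendsto (fun n => q n l) F (𝓝 (Q l))) {c : ℝ} (hc : c ∈ Ico (0 : ℝ) 1)
    (hfc : pgf Q c < c) :
    Tendsto (fun n => extinctionProb (q n)) F (𝓝 (extinctionProb Q)) := by
  refine tendsto_order.2 ⟨fun a ha => ?_, fun a ha => ?_⟩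
  · rcases lt_or_ge a 0 with ha0 | ha0
    · exact Eventually.of_forall fun n => ha0.trans_le (extinctionProb_nonneg (hq n))
    have ha1 : a < 1 := ha.trans_le (extinctionProb_le_one hQ)
    filter_upwards [(tendsto_pgf hq0 hq hdist ⟨ha0, ha1⟩).eventually
      (lt_mem_nhds (lt_pgf_of_lt_extinctionProb hQ0 hQ ha0 ha))] with n hn
    exact lt_of_not_ge fun h =>
      hn.not_ge (pgf_le_self_of_extinctionProb_le (hq0 n) (hq n) h ha1.le)
  · obtain ⟨z, hρz, hz⟩ := exists_between (lt_min ha (extinctionProb_lt_one hQ0 hQ hc hfc))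
    have hza : z < a := hz.trans_le (min_le_left _ _)
    have hz1 : z < 1 := hz.trans_le (min_le_right _ _)
    have hz0 : 0 ≤ z := (extinctionProb_nonneg hQ).trans hρz.le
    filter_upwards [(tendsto_pgf hq0 hq hdist ⟨hz0, hz1⟩).eventually
      (gt_mem_nhds (pgf_lt_self_of_extinctionProb_lt hQ0 hQ hc hfc hρz hz1))] with n hn
    exact (extinctionProb_le_of_pgf_le (hq0 n) (hq n).summable ⟨hz0, hz1.le⟩ hn.le).trans_lt hza

end GaltonWatson

open GaltonWatson in
theorem survival_probability_tendsto_general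
    (q : ℕ → ℕ → ℝ) (hq0 : ∀ n l, 0 ≤ q n l) (hqsum : ∀ n, HasSum (q n) 1)
    (Q : ℕ → ℝ) (hQ0 : ∀ l, 0 ≤ Q l) (hQsum : HasSum Q 1)
    (ν : ℝ) (hν : HasSum (fun l : ℕ => (l : ℝ) * Q l) ν) (hν1 : 1 < ν)
    (hdist : ∀ l, Tendsto (fun n => q n l) atTop (nhds (Q l)))
    (ρn : ℕ → ℝ)
    (hρn : ∀ n, ρn n = sInf {z : ℝ | z ∈ Set.Icc (0 : ℝ) 1 ∧ ∑' l : ℕ, q n l * z ^ l = z})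
    (ρ : ℝ) (hρ : ρ = sInf {z : ℝ | z ∈ Set.Icc (0 : ℝ) 1 ∧ ∑' l : ℕ, Q l * z ^ l = z}) :
    Tendsto (fun n => 1 - ρn n) atTop (nhds (1 - ρ)) ∧ 0 < 1 - ρ := by
  have hρn' : ρn = fun n => extinctionProb (q n) := funext hρn
  have hρ' : ρ = extinctionProb Q := hρ
  subst hρn' hρ'
  obtain ⟨c, hc, hfc⟩ := exists_pgf_lt_self hQ0 hQsum hν hν1
  refine ⟨tendsto_const_nhds.sub (tendsto_extinctionProb hq0 hqsum hQ0 hQsum hdist hc hfc), ?_⟩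
  exact sub_pos.2 (extinctionProb_lt_one hQ0 hQsum hc hfc)

/-- If probability distributions `q n` on ℕ converge in distribution and in expectation to a
distribution `q` with mean `ν > 1` (and `q 1 < 1`), then the survival probabilities
`s n = 1 - ρ n` of the Galton–Watson processes with offspring distributions `q n` converge
to the survival probability `s = 1 - ρ > 0` of the limit process, where `ρ n` (resp. `ρ`) is
the smallest fixed point in `[0,1]` of the corresponding generating function. -/
theorem survival_probability_tendsto
    (q : ℕ → ℕ → ℝ) (hq0 : ∀ n l, 0 ≤ q n l) (hqsum : ∀ n, HasSum (q n) 1)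
    (Q : ℕ → ℝ) (hQ0 : ∀ l, 0 ≤ Q l) (hQsum : HasSum Q 1) (hQ1 : Q 1 < 1)
    (ν : ℝ) (hν : HasSum (fun l : ℕ => (l : ℝ) * Q l) ν) (hν1 : 1 < ν)
    (hdist : ∀ l, Tendsto (fun n => q n l) atTop (nhds (Q l)))
    (hmean : ∀ n, Summable (fun l : ℕ => (l : ℝ) * q n l))
    (hmeanlim : Tendsto (fun n => ∑' l : ℕ, (l : ℝ) * q n l) atTop (nhds ν))
    (ρn : ℕ → ℝ)
    (hρn : ∀ n, ρn n = sInf {z : ℝ | z ∈ Set.Icc (0 : ℝ) 1 ∧ ∑' l : ℕ, q n l * z ^ l = z})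
    (ρ : ℝ) (hρ : ρ = sInf {z : ℝ | z ∈ Set.Icc (0 : ℝ) 1 ∧ ∑' l : ℕ, Q l * z ^ l = z}) :
    Tendsto (fun n => 1 - ρn n) atTop (nhds (1 - ρ)) ∧ 0 < 1 - ρ :=
  survival_probability_tendsto_general q hq0 hqsum Q hQ0 hQsum ν hν hν1 hdist ρn hρn ρ hρ
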